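/- The relation ≺ induced on the inner boxes of an acyclic wiring diagram extends to a relation on the boxes of a partial (circle-i) composite of two acyclic wiring diagrams, and this induced relation is again a strict partial order; hence the operadic partial composite of two acyclic wiring diagrams is acyclic. -/
import Mathlib


/-- The order induced on the boxes of a partial (circle-i) composite of two acyclic
wiring diagrams.  The boxes of `Ψ ;_i Φ` are the boxes `t^j` of `Φ` with `j ≠ i`
together with the boxes `s^k` of `Ψ`; the induced relation is:
`s ≺ s'` iff `s ≺_Ψ s'`; `s ≺ t^j` iff `t^i ≺_Φ t^j`; `t^j ≺ s` iff `t^j ≺_Φ t^i`;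
`t^j ≺ t^j'` iff `t^j ≺_Φ t^j'`. -/
def inducedRel {n m : Type} (i : n) (PΦ : n → n → Prop) (PΨ : m → m → Prop) :
    ({j : n // j ≠ i} ⊕ m) → ({j : n // j ≠ i} ⊕ m) → Prop := fun a b =>
  match a, b with
  | .inl j, .inl j' => PΦ j.1 j'.1
  | .inr _, .inl j' => PΦ i j'.1
  | .inl j, .inr _ => PΦ j.1 i
  | .inr k, .inr k' => PΨ k k'

/-- If the progress orders `≺_Φ` and `≺_Ψ` of two acyclic wiring diagrams are strict
partial orders (transitive and irreflexive), then the relation induced on the boxes of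
the partial composite `Ψ ;_i Φ` is again a strict partial order; hence the operadic
partial composite of acyclic wiring diagrams is acyclic. -/
theorem inducedRel_strictOrder {n m : Type} [Fintype n] [Fintype m] (i : n)
    (PΦ : n → n → Prop) (PΨ : m → m → Prop)
    (hΦtrans : Transitive PΦ) (hΦirrefl : Irreflexive PΦ)
    (hΨtrans : Transitive PΨ) (hΨirrefl : Irreflexive PΨ) :
    Transitive (inducedRel i PΦ PΨ) ∧ Irreflexive (inducedRel i PΦ PΨ) := by
  constructor
  · rintro (a | a) (b | b) (c | c) hab hbc <;>
      simp only [inducedRel] at * <;>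
      first
        | exact hΦtrans hab hbc
        | exact hΨtrans hab hbc
        | exact hab
        | exact hbc
        | exact absurd (hΦtrans hab hbc) (hΦirrefl i)
  · rintro (a | a) h <;> simp only [inducedRel] at h
    · exact hΦirrefl _ h
    · exact hΨirrefl _ h
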